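/- arXiv:2007.02448 — 2 statements merged into one kernel-verified Lean document; each statement's English description precedes it below -/
import Mathlib

section
/- The optimal cost of the linear inverse problem and the gauge function satisfy (β(φ,x,ε,δ))^{1/p} = inf{ ‖y‖_φ : y ∈ B̄(x,ε) }; in particular both sides equal +∞ when x is not (φ,ε,δ)-feasible, and when x is (φ,ε,δ)-feasible the infimum is attained. -/
open scoped ENNReal RealInnerProductSpace Pointwise
open Metric Set

noncomputable section

variable {H : Type*} [NormedAddCommGroup H] [InnerProductSpace ℝ H]

/-- Feasible pairs `(𝔠, f)` of the linear inverse problem `LIP(φ, x, ε, δ)`: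
`(c f)^(1/p) ≤ 𝔠` and `‖x - φ f‖ ≤ ε + δ 𝔠`. -/
def lipFeas (K : ℕ) (p : ℝ) (c : (Fin K → ℝ) → ℝ)
    (φ : (Fin K → ℝ) →ₗ[ℝ] H) (x : H) (ε δ : ℝ) : Set (ℝ × (Fin K → ℝ)) :=
  {cf | c cf.2 ^ (1 / p) ≤ cf.1 ∧ ‖x - φ cf.2‖ ≤ ε + δ * cf.1}

/-- The optimal value `β(φ,x,ε,δ) ∈ [0,∞]` of `LIP(φ,x,ε,δ)`, i.e. the infimum of `𝔠^p`
over feasible pairs `(𝔠,f)`; it equals `∞` if the problem is infeasible. -/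
def lipVal (K : ℕ) (p : ℝ) (c : (Fin K → ℝ) → ℝ)
    (φ : (Fin K → ℝ) →ₗ[ℝ] H) (x : H) (ε δ : ℝ) : ℝ≥0∞ :=
  sInf ((fun cf : ℝ × (Fin K → ℝ) => ENNReal.ofReal (cf.1 ^ p)) '' lipFeas K p c φ x ε δ)

/-- `E(φ,x,ε,δ)`: the set of `f`-components of optimal solutions of `LIP(φ,x,ε,δ)`. -/
def lipEnc (K : ℕ) (p : ℝ) (c : (Fin K → ℝ) → ℝ)
    (φ : (Fin K → ℝ) →ₗ[ℝ] H) (x : H) (ε δ : ℝ) : Set (Fin K → ℝ) :=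
  {f | ∃ 𝔠 : ℝ, (𝔠, f) ∈ lipFeas K p c φ x ε δ ∧
      ENNReal.ofReal (𝔠 ^ p) = lipVal K p c φ x ε δ}

/-- The set `S_δ(φ,1) = {z : ∃ f, c f ≤ 1 ∧ ‖z - φ f‖ ≤ δ}`. -/
def lipSet (K : ℕ) (c : (Fin K → ℝ) → ℝ)
    (φ : (Fin K → ℝ) →ₗ[ℝ] H) (δ : ℝ) : Set H :=
  {z | ∃ f, c f ≤ 1 ∧ ‖z - φ f‖ ≤ δ}

/-- The dual function `‖λ‖'_φ = sup {⟨λ,z⟩ : z ∈ S_δ(φ,1)}`. -/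
def lipDual (K : ℕ) (c : (Fin K → ℝ) → ℝ)
    (φ : (Fin K → ℝ) →ₗ[ℝ] H) (δ : ℝ) (l : H) : ℝ :=
  sSup ((fun z => ⟪l, z⟫) '' lipSet K c φ δ)

/-- The set `Λ_δ(φ,x,ε)` of optimal dual variables: `λ` with `‖λ‖'_φ = 1` and
`⟨λ,x⟩ - ε‖λ‖ = (β(φ,x,ε,δ))^(1/p)`. -/
def lipLambda (K : ℕ) (p : ℝ) (c : (Fin K → ℝ) → ℝ)
    (φ : (Fin K → ℝ) →ₗ[ℝ] H) (x : H) (ε δ : ℝ) : Set H :=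
  {l | lipDual K c φ δ l = 1 ∧
      ENNReal.ofReal (⟪l, x⟫ - ε * ‖l‖) = lipVal K p c φ x ε δ ^ (1 / p)}

/-- The gauge function `‖z‖_φ := min { r ≥ 0 : z ∈ r • S_δ(φ,1) } ∈ [0,∞]`
(`∞` if no such `r` exists). -/
def lipGauge (K : ℕ) (c : (Fin K → ℝ) → ℝ)
    (φ : (Fin K → ℝ) →ₗ[ℝ] H) (δ : ℝ) (z : H) : ℝ≥0∞ :=
  sInf {t : ℝ≥0∞ | ∃ r : ℝ, 0 ≤ r ∧ z ∈ r • lipSet K c φ δ ∧ t = ENNReal.ofReal r}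

/-!
A pair `(𝔠, f)` is feasible iff `f ∈ 𝔠 • V` and `‖x - φ f‖ ≤ ε + δ𝔠`, i.e. iff the ball
`B̄(x, ε)` meets `𝔠 • S_δ(φ,1) = ⋃_{f ∈ 𝔠 • V} B̄(φ f, 𝔠δ)`. So both sides are the infimum of the
same set of costs `𝔠`. This set has a least element: below any feasible cost `𝔠₀` it is the
projection of a compact subset of `[0, 𝔠₀] × V`.
-/

def IsPosHomogeneous {E : Type*} [AddCommGroup E] [Module ℝ E] (p : ℝ) (c : E → ℝ) : Prop :=
  ∀ (α : ℝ) (f : E), 0 ≤ α → c (α • f) = α ^ p * c f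

namespace IsPosHomogeneous

variable {E : Type*} [NormedAddCommGroup E] [NormedSpace ℝ E] {p r : ℝ} {c : E → ℝ}

lemma map_zero (hc : IsPosHomogeneous p c) (hp : 0 < p) : c 0 = 0 := by
  simpa [Real.zero_rpow hp.ne'] using hc 0 0 le_rfl

/-- If `c f ≤ 0`, the whole ray through `f` lies in the unit sublevel set. -/
lemma eq_zero_of_le_zero (hc : IsPosHomogeneous p c)
    (hV : Bornology.IsBounded {f | c f ≤ 1}) {f : E} (hf : c f ≤ 0) : f = 0 := by
  by_contra hf0
  obtain ⟨R, hR, hRV⟩ := hV.exists_pos_norm_le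
  have hnorm : 0 < ‖f‖ := norm_pos_iff.2 hf0
  have ht : 0 ≤ 2 * R / ‖f‖ := by positivity
  have hmem : c ((2 * R / ‖f‖) • f) ≤ 1 := by
    rw [hc _ _ ht]
    nlinarith [Real.rpow_nonneg ht p]
  have := hRV _ hmem
  rw [norm_smul, Real.norm_of_nonneg ht, div_mul_cancel₀ _ hnorm.ne'] at this
  linarith

lemma setOf_le_rpow (hc : IsPosHomogeneous p c) (hp : 0 < p)
    (hV : Bornology.IsBounded {f | c f ≤ 1}) (hr : 0 ≤ r) :
    {f | c f ≤ r ^ p} = r • {f | c f ≤ 1} := by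
  rcases hr.eq_or_lt with rfl | hr
  · have h0 : (0 : E) ∈ {f | c f ≤ 1} := by simp [hc.map_zero hp]
    rw [Real.zero_rpow hp.ne', zero_smul_set ⟨0, h0⟩]
    ext f
    rw [mem_ofPred, mem_zero]
    exact ⟨hc.eq_zero_of_le_zero hV, by rintro rfl; rw [hc.map_zero hp]⟩
  · ext f
    rw [mem_smul_set_iff_inv_smul_mem₀ hr.ne', mem_ofPred, mem_ofPred,
      hc _ _ (inv_nonneg.2 hr.le), Real.inv_rpow hr.le,
      inv_mul_le_iff₀ (Real.rpow_pos_of_pos hr p), mul_one]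

end IsPosHomogeneous

section LinearInverseProblem

variable {K : ℕ} {p r : ℝ} {c : (Fin K → ℝ) → ℝ} {φ : (Fin K → ℝ) →ₗ[ℝ] H} {x : H} {ε δ : ℝ}

lemma nonneg_of_mem_lipFeas (hc0 : ∀ f, 0 ≤ c f) {q : ℝ × (Fin K → ℝ)}
    (hq : q ∈ lipFeas K p c φ x ε δ) : 0 ≤ q.1 :=
  (Real.rpow_nonneg (hc0 q.2) _).trans hq.1

lemma mem_lipFeas_iff (hp : 0 < p) (hc0 : ∀ f, 0 ≤ c f) (hc : IsPosHomogeneous p c)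
    (hV : Bornology.IsBounded {f | c f ≤ 1}) {f : Fin K → ℝ} :
    (r, f) ∈ lipFeas K p c φ x ε δ ↔ 0 ≤ r ∧ f ∈ r • {f | c f ≤ 1} ∧ ‖x - φ f‖ ≤ ε + δ * r := by
  refine ⟨fun ⟨hcost, hdist⟩ => ?_, fun ⟨hr, hf, hdist⟩ => ⟨?_, hdist⟩⟩
  · have hr : 0 ≤ r := (Real.rpow_nonneg (hc0 f) _).trans hcost
    rw [one_div, Real.rpow_inv_le_iff_of_pos (hc0 f) hr hp] at hcost
    exact ⟨hr, hc.setOf_le_rpow hp hV hr ▸ hcost, hdist⟩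
  · rw [← hc.setOf_le_rpow hp hV hr] at hf
    rwa [one_div, Real.rpow_inv_le_iff_of_pos (hc0 f) hr hp]

lemma lipSet_eq_iUnion : lipSet K c φ δ = ⋃ f ∈ {f | c f ≤ 1}, closedBall (φ f) δ := by
  ext z
  simp [lipSet, dist_eq_norm]

lemma mem_smul_lipSet_iff (hδ : 0 ≤ δ) (hr : 0 ≤ r) {z : H} :
    z ∈ r • lipSet K c φ δ ↔ ∃ f ∈ r • {f | c f ≤ 1}, ‖z - φ f‖ ≤ r * δ := by
  rw [lipSet_eq_iUnion, smul_set_iUnion₂]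
  simp [smul_closedBall _ _ hδ, Real.norm_of_nonneg hr, dist_eq_norm, mem_smul_set]

lemma fst_image_lipFeas (hp : 0 < p) (hc0 : ∀ f, 0 ≤ c f) (hc : IsPosHomogeneous p c)
    (hV : Bornology.IsBounded {f | c f ≤ 1}) (hε : 0 ≤ ε) (hδ : 0 ≤ δ) :
    Prod.fst '' lipFeas K p c φ x ε δ
      = {r | 0 ≤ r ∧ (closedBall x ε ∩ r • lipSet K c φ δ).Nonempty} := by
  ext r
  simp only [mem_image, Prod.exists, exists_and_right, exists_eq_right,
    mem_lipFeas_iff hp hc0 hc hV]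
  constructor
  · rintro ⟨f, hr, hf, hdist⟩
    obtain ⟨y, hfy, hyx⟩ := exists_dist_le_le (mul_nonneg hr hδ) hε
      (by rwa [dist_comm, dist_eq_norm, mul_comm] : dist (φ f) x ≤ ε + r * δ)
    refine ⟨hr, y, hyx, (mem_smul_lipSet_iff hδ hr).2 ⟨f, hf, ?_⟩⟩
    rwa [← dist_eq_norm, dist_comm]
  · rintro ⟨hr, y, hyx, hyS⟩
    obtain ⟨f, hf, hyf⟩ := (mem_smul_lipSet_iff hδ hr).1 hyS
    refine ⟨f, hr, hf, ?_⟩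
    calc ‖x - φ f‖ ≤ ‖x - y‖ + ‖y - φ f‖ := norm_sub_le_norm_sub_add_norm_sub _ _ _
      _ ≤ ε + δ * r := by
        rw [mem_closedBall, dist_eq_norm, norm_sub_rev] at hyx
        linarith

lemma sInf_lipGauge_image (B : Set H) :
    sInf (lipGauge K c φ δ '' B)
      = sInf (ENNReal.ofReal '' {r | 0 ≤ r ∧ (B ∩ r • lipSet K c φ δ).Nonempty}) := by
  apply le_antisymm
  · refine le_sInf ?_
    rintro _ ⟨r, ⟨hr, y, hyB, hyS⟩, rfl⟩
    exact (sInf_le (mem_image_of_mem _ hyB)).trans (sInf_le ⟨r, hr, hyS, rfl⟩)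
  · refine le_sInf ?_
    rintro _ ⟨y, hyB, rfl⟩
    refine le_sInf ?_
    rintro _ ⟨r, hr, hyS, rfl⟩
    exact sInf_le (mem_image_of_mem _ ⟨hr, y, hyB, hyS⟩)

lemma lipVal_rpow_one_div (hp : 0 < p) (hc0 : ∀ f, 0 ≤ c f) :
    lipVal K p c φ x ε δ ^ (1 / p)
      = sInf (ENNReal.ofReal '' (Prod.fst '' lipFeas K p c φ x ε δ)) := by
  rw [lipVal, ← ENNReal.orderIsoRpow_apply _ (one_div_pos.2 hp), map_sInf, image_image,
    image_image]
  refine congrArg sInf (image_congr fun q hq => ?_)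
  rw [ENNReal.orderIsoRpow_apply,
    ← ENNReal.ofReal_rpow_of_nonneg (nonneg_of_mem_lipFeas hc0 hq) hp.le, ← ENNReal.rpow_mul,
    mul_one_div_cancel hp.ne', ENNReal.rpow_one]

lemma exists_isLeast_fst_image_lipFeas (hp : 0 < p) (hc0 : ∀ f, 0 ≤ c f)
    (hc : IsPosHomogeneous p c) (hV : IsCompact {f | c f ≤ 1})
    (hne : (lipFeas K p c φ x ε δ).Nonempty) :
    ∃ m, IsLeast (Prod.fst '' lipFeas K p c φ x ε δ) m := by
  obtain ⟨⟨r₀, f₀⟩, h₀⟩ := hne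
  have hφ : Continuous φ := φ.continuous_of_finiteDimensional
  set T := (Icc 0 r₀ ×ˢ {f | c f ≤ 1}) ∩ {q | ‖x - φ (q.1 • q.2)‖ ≤ ε + δ * q.1}
  have hT : IsCompact T :=
    (isCompact_Icc.prod hV).inter_right (isClosed_le (by fun_prop) (by fun_prop))
  have hfst : Prod.fst '' T = Prod.fst '' lipFeas K p c φ x ε δ ∩ Iic r₀ := by
    ext r
    simp only [T, mem_image, mem_inter_iff, mem_prod, mem_Icc, mem_ofPred_eq, mem_Iic, Prod.exists,
      exists_and_right, exists_eq_right, mem_lipFeas_iff hp hc0 hc hV.isBounded, mem_smul_set,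
      map_smul, ↓existsAndEq, and_true, exists_and_left]
    constructor
    · rintro ⟨g, ⟨⟨hr, hr₀⟩, hg⟩, hdist⟩
      exact ⟨⟨hr, g, hg, hdist⟩, hr₀⟩
    · rintro ⟨⟨hr, g, hg, hdist⟩, hr₀⟩
      exact ⟨g, ⟨⟨hr, hr₀⟩, hg⟩, hdist⟩
  obtain ⟨m, hmT, hm⟩ :=
    (hT.image continuous_fst).exists_isLeast ⟨r₀, hfst ▸ ⟨mem_image_of_mem _ h₀, self_mem_Iic⟩⟩
  rw [hfst] at hmT hm
  refine ⟨m, hmT.1, fun r hr => ?_⟩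
  rcases le_total r r₀ with h | h
  · exact hm ⟨hr, h⟩
  · exact (hm ⟨mem_image_of_mem _ h₀, self_mem_Iic⟩).trans h

end LinearInverseProblem

theorem lipVal_rpow_eq_inf_gauge_general
    (K : ℕ) (p : ℝ) (c : (Fin K → ℝ) → ℝ)
    (φ : (Fin K → ℝ) →ₗ[ℝ] H) (x : H) (ε δ : ℝ)
    (hp : 0 < p) (hc0 : ∀ f, 0 ≤ c f)
    (hhom : ∀ (α : ℝ) (f : Fin K → ℝ), 0 ≤ α → c (α • f) = α ^ p * c f)
    (hcpt : IsCompact {f | c f ≤ 1})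
    (hε : 0 ≤ ε) (hδ : 0 ≤ δ) :
    lipVal K p c φ x ε δ ^ (1 / p) = sInf (lipGauge K c φ δ '' closedBall x ε) ∧
    (lipVal K p c φ x ε δ ≠ ⊤ → ∃ y ∈ closedBall x ε,
      lipGauge K c φ δ y = sInf (lipGauge K c φ δ '' closedBall x ε)) := by
  have hcosts := fst_image_lipFeas (φ := φ) (x := x) hp hc0 hhom hcpt.isBounded hε hδ
  have hinf : sInf (lipGauge K c φ δ '' closedBall x ε)
      = sInf (ENNReal.ofReal '' (Prod.fst '' lipFeas K p c φ x ε δ)) := by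
    rw [sInf_lipGauge_image, hcosts]
  refine ⟨(lipVal_rpow_one_div hp hc0).trans hinf.symm, fun hfin => ?_⟩
  have hne : (lipFeas K p c φ x ε δ).Nonempty := by
    by_contra h
    simp [lipVal, not_nonempty_iff_eq_empty.1 h] at hfin
  obtain ⟨m, hm⟩ := exists_isLeast_fst_image_lipFeas hp hc0 hhom hcpt hne
  obtain ⟨hm0, y, hyx, hyS⟩ := hcosts ▸ hm.1
  refine ⟨y, hyx, le_antisymm ?_ (sInf_le (mem_image_of_mem _ hyx))⟩
  rw [hinf, (ENNReal.ofReal_mono.map_isLeast hm).isGLB.sInf_eq]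
  exact sInf_le ⟨m, hm0, hyS, rfl⟩

/-- `(β(φ,x,ε,δ))^(1/p) = inf { ‖y‖_φ : y ∈ B̄(x,ε) }` (both sides being
`∞` when `x` is not `(φ,ε,δ)`-feasible), and the infimum is attained when `x` is feasible. -/
theorem lipVal_rpow_eq_inf_gauge
    [FiniteDimensional ℝ H]
    (K : ℕ) (p : ℝ) (c : (Fin K → ℝ) → ℝ)
    (φ : (Fin K → ℝ) →ₗ[ℝ] H) (x : H) (ε δ : ℝ)
    (hp : 0 < p) (hc0 : ∀ f, 0 ≤ c f)
    (hhom : ∀ (α : ℝ) (f : Fin K → ℝ), 0 ≤ α → c (α • f) = α ^ p * c f)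
    (hconv : Convex ℝ {f | c f ≤ 1}) (hcpt : IsCompact {f | c f ≤ 1})
    (hε : 0 ≤ ε) (hδ : 0 ≤ δ) :
    lipVal K p c φ x ε δ ^ (1 / p) = sInf (lipGauge K c φ δ '' closedBall x ε) ∧
    (lipVal K p c φ x ε δ ≠ ⊤ → ∃ y ∈ closedBall x ε,
      lipGauge K c φ δ y = sInf (lipGauge K c φ δ '' closedBall x ε)) :=
  lipVal_rpow_eq_inf_gauge_general K p c φ x ε δ hp hc0 hhom hcpt hε hδ
end
end

section
/- Let x be (φ,ε,δ)-feasible with ‖x‖ > ε, and suppose at least one of the following holds: (a) δ > 0; or (b) δ = 0, ε > 0, and the open ball B(x,ε) intersects image(φ). Then Λ_δ(φ,x,ε) consists of exactly one element λ*, given by λ* = (x − φ(f_x)) / ‖x − φ(f_x)‖'_φ for any f_x ∈ E(φ,x,ε,δ) (the right-hand side being independent of the choice of f_x ∈ E(φ,x,ε,δ)). -/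
open scoped ENNReal RealInnerProductSpace Pointwise
open Metric Set

noncomputable section

variable {H : Type*} [NormedAddCommGroup H] [InnerProductSpace ℝ H]

section Helpers

variable {K : ℕ} {p : ℝ} {c : (Fin K → ℝ) → ℝ} {φ : (Fin K → ℝ) →ₗ[ℝ] H} {x : H} {ε δ : ℝ}

lemma pow_aux1 (hp : 0 < p) {a s : ℝ} (ha : 0 ≤ a) (h : a ^ (1/p) ≤ s) : a ≤ s ^ p := by
  have h0 : (0:ℝ) ≤ a ^ (1/p) := Real.rpow_nonneg ha _
  have : a = (a ^ (1/p)) ^ p := by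
    rw [← Real.rpow_mul ha, one_div_mul_cancel hp.ne', Real.rpow_one]
  rw [this]
  exact Real.rpow_le_rpow h0 h hp.le

lemma pow_aux2 (hp : 0 < p) {a s : ℝ} (ha : 0 ≤ a) (hs : 0 ≤ s) (h : a ≤ s ^ p) :
    a ^ (1/p) ≤ s := by
  have : (s ^ p) ^ (1/p) = s := by
    rw [← Real.rpow_mul hs, mul_one_div_cancel hp.ne', Real.rpow_one]
  calc a ^ (1/p) ≤ (s ^ p) ^ (1/p) := Real.rpow_le_rpow ha h (by positivity)
    _ = s := this

lemma pow_aux3 (hp : 0 < p) {s : ℝ} (hs : 0 ≤ s) : (s ^ p) ^ (1/p) = s := by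
  rw [← Real.rpow_mul hs, mul_one_div_cancel hp.ne', Real.rpow_one]

lemma lip_c_zero (hp : 0 < p)
    (hhom : ∀ (α : ℝ) (f : Fin K → ℝ), 0 ≤ α → c (α • f) = α ^ p * c f) :
    c 0 = 0 := by
  have := hhom 0 0 le_rfl
  simpa [Real.zero_rpow hp.ne'] using this

lemma lip_zero_mem (hp : 0 < p)
    (hhom : ∀ (α : ℝ) (f : Fin K → ℝ), 0 ≤ α → c (α • f) = α ^ p * c f)
    (hδ : 0 ≤ δ) : (0:H) ∈ lipSet K c φ δ :=
  ⟨0, by simp [lip_c_zero hp hhom], by simpa using hδ⟩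

lemma lip_ball_mem (hp : 0 < p)
    (hhom : ∀ (α : ℝ) (f : Fin K → ℝ), 0 ≤ α → c (α • f) = α ^ p * c f)
    {z : H} (hz : ‖z‖ ≤ δ) : z ∈ lipSet K c φ δ :=
  ⟨0, by simp [lip_c_zero hp hhom], by simpa using hz⟩

lemma lipSet_eq : lipSet K c φ δ = φ '' {f | c f ≤ 1} + closedBall 0 δ := by
  ext z
  constructor
  · rintro ⟨f, hf, hz⟩
    exact ⟨φ f, ⟨f, hf, rfl⟩, z - φ f, by simpa [dist_eq_norm] using hz, by module⟩
  · rintro ⟨-, ⟨f, hf, rfl⟩, w, hw, rfl⟩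
    exact ⟨f, hf, by simpa [dist_eq_norm] using hw⟩

lemma lipSet_compact [FiniteDimensional ℝ H] (hcpt : IsCompact {f | c f ≤ 1}) :
    IsCompact (lipSet K c φ δ) := by
  rw [lipSet_eq]
  exact (hcpt.image (φ.continuous_of_finiteDimensional)).add (isCompact_closedBall 0 δ)

lemma lipSet_convex (hconv : Convex ℝ {f | c f ≤ 1}) : Convex ℝ (lipSet K c φ δ) := by
  rw [lipSet_eq]
  exact (hconv.linear_image φ).add (convex_closedBall _ _)

lemma lipDual_bddAbove [FiniteDimensional ℝ H] (hcpt : IsCompact {f | c f ≤ 1}) (l : H) :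
    BddAbove ((fun z => ⟪l, z⟫) '' lipSet K c φ δ) :=
  ((lipSet_compact hcpt).image (continuous_const.inner continuous_id)).bddAbove

lemma lipDual_ge [FiniteDimensional ℝ H] (hcpt : IsCompact {f | c f ≤ 1}) (l : H) {z : H}
    (hz : z ∈ lipSet K c φ δ) : ⟪l, z⟫ ≤ lipDual K c φ δ l :=
  le_csSup (lipDual_bddAbove hcpt l) (Set.mem_image_of_mem _ hz)

lemma lipDual_smul (a : ℝ) (ha : 0 ≤ a) (l : H) :
    lipDual K c φ δ (a • l) = a * lipDual K c φ δ l := by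
  have h1 : (fun z : H => ⟪a • l, z⟫) '' lipSet K c φ δ
      = a • ((fun z : H => ⟪l, z⟫) '' lipSet K c φ δ) := by
    rw [← Set.image_smul, ← Set.image_comp]
    exact Set.image_congr fun z _ => by
      simp [real_inner_smul_left, smul_eq_mul]
  rw [lipDual, h1, Real.sSup_smul_of_nonneg ha, smul_eq_mul, lipDual]

lemma lipDual_nonneg [FiniteDimensional ℝ H] (hp : 0 < p)
    (hhom : ∀ (α : ℝ) (f : Fin K → ℝ), 0 ≤ α → c (α • f) = α ^ p * c f)
    (hδ : 0 ≤ δ) (hcpt : IsCompact {f | c f ≤ 1}) (l : H) :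
    0 ≤ lipDual K c φ δ l := by
  have := lipDual_ge (φ := φ) (δ := δ) hcpt l (lip_zero_mem hp hhom hδ)
  simpa using this

lemma lipDual_zero (hp : 0 < p)
    (hhom : ∀ (α : ℝ) (f : Fin K → ℝ), 0 ≤ α → c (α • f) = α ^ p * c f)
    (hδ : 0 ≤ δ) : lipDual K c φ δ (0:H) = 0 := by
  have hne : (lipSet K c φ δ).Nonempty := ⟨0, lip_zero_mem hp hhom hδ⟩
  rw [lipDual]
  have : (fun z : H => ⟪(0:H), z⟫) '' lipSet K c φ δ = {0} := by
    rw [show (fun z : H => ⟪(0:H), z⟫) = fun _ => (0:ℝ) from funext fun z => inner_zero_left z]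
    exact hne.image_const 0
  rw [this, csSup_singleton]

lemma support_aux {C : Set H} (hC : Convex ℝ C) {b x : H} (hb : b ∈ interior C)
    (F : H →L[ℝ] ℝ) (hF : ∀ a ∈ interior C, F a < F x) {y : H} (hy : y ∈ C) : F y ≤ F x := by
  have key : ∀ n : ℕ, (1/((n:ℝ)+1)) * F b + (1 - 1/((n:ℝ)+1)) * F y ≤ F x := by
    intro n
    have ha : (0:ℝ) < 1/((n:ℝ)+1) := by positivity
    have hb' : (0:ℝ) ≤ 1 - 1/((n:ℝ)+1) := by
      rw [sub_nonneg]
      exact div_le_one_of_le₀ (by linarith [Nat.cast_nonneg (α := ℝ) n]) (by positivity)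
    have hmem := hC.combo_interior_closure_mem_interior hb (subset_closure hy) ha hb' (by ring)
    have := hF _ hmem
    simpa [map_add, map_smul, smul_eq_mul] using this.le
  have htend : Filter.Tendsto
      (fun n : ℕ => (1/((n:ℝ)+1)) * F b + (1 - 1/((n:ℝ)+1)) * F y)
      Filter.atTop (nhds (0 * F b + (1 - 0) * F y)) :=
    (tendsto_one_div_add_atTop_nhds_zero_nat.mul_const _).add
      ((tendsto_const_nhds.sub tendsto_one_div_add_atTop_nhds_zero_nat).mul_const _)
  have := le_of_tendsto htend (Filter.Eventually.of_forall key)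
  simpa using this

/-- every feasible scale is strictly positive -/
lemma lip_feas_pos (hp : 0 < p) (hc0 : ∀ f, 0 ≤ c f)
    (hhom : ∀ (α : ℝ) (f : Fin K → ℝ), 0 ≤ α → c (α • f) = α ^ p * c f)
    (hcpt : IsCompact {f | c f ≤ 1}) (hx : ε < ‖x‖)
    {s : ℝ} {g : Fin K → ℝ} (hsg : (s, g) ∈ lipFeas K p c φ x ε δ) : 0 < s := by
  obtain ⟨h1, h2⟩ := hsg
  simp only at h1 h2
  have hs0 : 0 ≤ s := le_trans (Real.rpow_nonneg (hc0 g) _) h1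
  rcases hs0.lt_or_eq with h | h
  · exact h
  exfalso
  rw [← h] at h1 h2
  have hcg : c g = 0 := by
    have hle := pow_aux1 hp (hc0 g) h1
    rw [Real.zero_rpow hp.ne'] at hle
    linarith [hc0 g]
  have hg0 : g = 0 := by
    obtain ⟨R, hR⟩ := isBounded_iff_forall_norm_le.mp hcpt.isBounded
    by_contra hg
    have hgn : 0 < ‖g‖ := norm_pos_iff.mpr hg
    set μ := (R+1)/‖g‖ with hμdef
    have hRnn : 0 ≤ R := le_trans (norm_nonneg g) (hR g (by simp [hcg]))
    have hμ : 0 ≤ μ := by positivity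
    have hmem : c (μ • g) ≤ 1 := by rw [hhom μ g hμ, hcg]; simp
    have hle := hR _ hmem
    rw [norm_smul, Real.norm_eq_abs, abs_of_nonneg hμ, hμdef,
      div_mul_cancel₀ _ hgn.ne'] at hle
    linarith
  rw [hg0, map_zero, sub_zero, mul_zero, add_zero] at h2
  linarith

/-- attainment of the optimal value -/
lemma lip_attain [FiniteDimensional ℝ H] (hp : 0 < p) (hc0 : ∀ f, 0 ≤ c f)
    (hhom : ∀ (α : ℝ) (f : Fin K → ℝ), 0 ≤ α → c (α • f) = α ^ p * c f)
    (hcpt : IsCompact {f | c f ≤ 1})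
    (hfeas : lipVal K p c φ x ε δ ≠ ⊤) (hx : ε < ‖x‖) :
    ∃ t fx, 0 < t ∧ (t, fx) ∈ lipFeas K p c φ x ε δ ∧
      (∀ s g, (s, g) ∈ lipFeas K p c φ x ε δ → t ≤ s) ∧
      lipVal K p c φ x ε δ = ENNReal.ofReal (t ^ p) := by
  have hne : (lipFeas K p c φ x ε δ).Nonempty := by
    by_contra h
    rw [Set.not_nonempty_iff_eq_empty] at h
    rw [lipVal, h, Set.image_empty, sInf_empty] at hfeas
    exact hfeas rfl
  obtain ⟨⟨s₀, g₀⟩, hfeas0⟩ := hne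
  have hs₀ : 0 < s₀ := lip_feas_pos hp hc0 hhom hcpt hx hfeas0
  set T : Set (ℝ × (Fin K → ℝ)) :=
    ((fun q : ℝ × (Fin K → ℝ) => (q.1, q.1 • q.2)) '' (Icc 0 s₀ ×ˢ {f | c f ≤ 1}))
      ∩ {q : ℝ × (Fin K → ℝ) | ‖x - φ q.2‖ ≤ ε + δ * q.1} with hT
  have hφc : Continuous φ := φ.continuous_of_finiteDimensional
  have hTcpt : IsCompact T := by
    apply IsCompact.inter_right
    · exact (isCompact_Icc.prod hcpt).image
        (continuous_fst.prodMk (continuous_fst.smul continuous_snd))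
    · exact isClosed_le ((continuous_const.sub (hφc.comp continuous_snd)).norm)
        (continuous_const.add (continuous_const.mul continuous_fst))
  have hTmem : ∀ s g, 0 < s → s ≤ s₀ → (s, g) ∈ lipFeas K p c φ x ε δ → (s, g) ∈ T := by
    intro s g hs hss hsg
    obtain ⟨h1, h2⟩ := hsg
    refine ⟨⟨(s, s⁻¹ • g), ⟨⟨le_of_lt hs, hss⟩, ?_⟩, ?_⟩, h2⟩
    · have hcg : c g ≤ s ^ p := pow_aux1 hp (hc0 g) h1
      have : c (s⁻¹ • g) = (s⁻¹) ^ p * c g := hhom _ _ (by positivity)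
      rw [Set.mem_setOf_eq, this]
      calc (s⁻¹) ^ p * c g ≤ (s⁻¹) ^ p * s ^ p :=
            mul_le_mul_of_nonneg_left hcg (Real.rpow_nonneg (by positivity) _)
        _ = (s⁻¹ * s) ^ p := (Real.mul_rpow (by positivity) hs.le).symm
        _ = 1 := by rw [inv_mul_cancel₀ hs.ne', Real.one_rpow]
    · simp [smul_smul, mul_inv_cancel₀ hs.ne']
  have hTne : T.Nonempty := ⟨(s₀, g₀), hTmem s₀ g₀ hs₀ le_rfl hfeas0⟩
  obtain ⟨⟨t, ft⟩, hmemT, hmin⟩ :=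
    hTcpt.exists_isMinOn hTne (continuous_fst.continuousOn)
  obtain ⟨⟨⟨s', v⟩, ⟨⟨hs'0, hs's⟩, hv⟩, heq⟩, hineq⟩ := hmemT
  simp only [Prod.mk.injEq] at heq
  obtain ⟨rfl, rfl⟩ := heq
  have hfeast : (s', s' • v) ∈ lipFeas K p c φ x ε δ := by
    refine ⟨?_, hineq⟩
    have hcv : c (s' • v) = s' ^ p * c v := hhom _ _ hs'0
    have : c (s' • v) ≤ s' ^ p := by
      rw [hcv]
      calc s' ^ p * c v ≤ s' ^ p * 1 :=
            mul_le_mul_of_nonneg_left hv (Real.rpow_nonneg hs'0 _)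
        _ = s' ^ p := mul_one _
    exact pow_aux2 hp (hc0 _) hs'0 this
  have ht0 : 0 < s' := lip_feas_pos hp hc0 hhom hcpt hx hfeast
  have hminall : ∀ s g, (s, g) ∈ lipFeas K p c φ x ε δ → s' ≤ s := by
    intro s g hsg
    have hs : 0 < s := lip_feas_pos hp hc0 hhom hcpt hx hsg
    rcases le_or_gt s s₀ with hss | hss
    · exact hmin (hTmem s g hs hss hsg)
    · exact le_trans hs's hss.le
  refine ⟨s', s' • v, ht0, hfeast, hminall, le_antisymm ?_ ?_⟩
  · exact sInf_le ⟨(s', s' • v), hfeast, rfl⟩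
  · apply le_sInf
    rintro b ⟨⟨s, g⟩, hsg, rfl⟩
    have hs' := hminall s g hsg
    exact ENNReal.ofReal_le_ofReal (Real.rpow_le_rpow ht0.le hs' hp.le)

lemma lip_val_rpow (hp : 0 < p) {t : ℝ} (ht0 : 0 < t)
    (hval : lipVal K p c φ x ε δ = ENNReal.ofReal (t ^ p)) :
    lipVal K p c φ x ε δ ^ (1/p) = ENNReal.ofReal t := by
  rw [hval, ENNReal.ofReal_rpow_of_pos (show (0:ℝ) < t ^ p by positivity), pow_aux3 hp ht0.le]

lemma lip_scale_mem (hp : 0 < p) (hc0 : ∀ f, 0 ≤ c f)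
    (hhom : ∀ (α : ℝ) (f : Fin K → ℝ), 0 ≤ α → c (α • f) = α ^ p * c f)
    {t : ℝ} (ht0 : 0 < t) {fx : Fin K → ℝ} (hcfx : c fx ≤ t ^ p) :
    c ((1/t) • fx) ≤ 1 := by
  rw [hhom _ _ (by positivity)]
  calc (1/t) ^ p * c fx ≤ (1/t) ^ p * t ^ p :=
        mul_le_mul_of_nonneg_left hcfx (Real.rpow_nonneg (by positivity) _)
    _ = ((1/t) * t) ^ p := (Real.mul_rpow (by positivity) ht0.le).symm
    _ = 1 := by rw [one_div_mul_cancel ht0.ne', Real.one_rpow]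

/-- uniqueness: every optimal dual variable equals the canonical one -/
lemma lip_uniq [FiniteDimensional ℝ H] (hp : 0 < p) (hc0 : ∀ f, 0 ≤ c f)
    (hhom : ∀ (α : ℝ) (f : Fin K → ℝ), 0 ≤ α → c (α • f) = α ^ p * c f)
    (hcpt : IsCompact {f | c f ≤ 1}) (hε : 0 ≤ ε) (hδ : 0 ≤ δ) (hx : ε < ‖x‖)
    (hcase : 0 < δ ∨ (δ = 0 ∧ 0 < ε ∧ (ball x ε ∩ (LinearMap.range φ : Set H)).Nonempty))
    {t : ℝ} (ht0 : 0 < t)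
    (hval : lipVal K p c φ x ε δ = ENNReal.ofReal (t ^ p))
    {l : H} (hl : l ∈ lipLambda K p c φ x ε δ)
    {fx : Fin K → ℝ} (hfx : fx ∈ lipEnc K p c φ x ε δ) :
    l = (lipDual K c φ δ (x - φ fx))⁻¹ • (x - φ fx) := by
  obtain ⟨hl1, hl2⟩ := hl
  have hδt : 0 < ε + δ * t := by
    rcases hcase with h | ⟨h, hε0, -⟩
    · have := mul_pos h ht0; linarith
    · have := mul_nonneg hδ ht0.le; linarith
  rw [lip_val_rpow hp ht0 hval] at hl2
  have ha : ⟪l, x⟫ - ε * ‖l‖ = t := by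
    rcases le_or_gt (⟪l, x⟫ - ε * ‖l‖) 0 with h | h
    · exfalso
      rw [ENNReal.ofReal_eq_zero.mpr h] at hl2
      have h2 := ENNReal.ofReal_pos.mpr ht0
      rw [← hl2] at h2
      exact lt_irrefl _ h2
    · exact (ENNReal.ofReal_eq_ofReal_iff h.le ht0.le).mp hl2
  have hlne : l ≠ 0 := by
    intro h
    rw [h, lipDual_zero hp hhom hδ] at hl1
    norm_num at hl1
  have hln : 0 < ‖l‖ := norm_pos_iff.mpr hlne
  obtain ⟨s, hsf, hsval⟩ := hfx
  have hs0 : 0 < s := lip_feas_pos hp hc0 hhom hcpt hx hsf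
  have hst : s = t := by
    rw [hval] at hsval
    have h1 : s ^ p = t ^ p :=
      (ENNReal.ofReal_eq_ofReal_iff (by positivity) (by positivity)).mp hsval
    calc s = (s ^ p) ^ (1/p) := (pow_aux3 hp hs0.le).symm
      _ = (t ^ p) ^ (1/p) := by rw [h1]
      _ = t := pow_aux3 hp ht0.le
  rw [hst] at hsf
  obtain ⟨hf1, hf2⟩ := hsf
  simp only at hf1 hf2
  have hcfx : c fx ≤ t ^ p := pow_aux1 hp (hc0 fx) hf1
  set w := x - φ fx with hw
  set r := ε + δ * t with hr
  have hz1S : φ ((1/t) • fx) + δ • (‖l‖⁻¹ • l) ∈ lipSet K c φ δ := by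
    refine ⟨(1/t) • fx, lip_scale_mem hp hc0 hhom ht0 hcfx, ?_⟩
    rw [add_sub_cancel_left, norm_smul, norm_smul, Real.norm_eq_abs, Real.norm_eq_abs,
      abs_of_nonneg hδ, abs_of_nonneg (inv_nonneg.mpr (norm_nonneg l)),
      inv_mul_cancel₀ hln.ne', mul_one]
  have hz1 := lipDual_ge hcpt l hz1S
  rw [hl1] at hz1
  have hinner : ⟪l, φ ((1/t) • fx) + δ • (‖l‖⁻¹ • l)⟫
      = (1/t) * ⟪l, φ fx⟫ + δ * ‖l‖ := by
    rw [map_smul, inner_add_right, real_inner_smul_right, real_inner_smul_right,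
      real_inner_smul_right, real_inner_self_eq_norm_mul_norm]
    congr 1
    rw [← mul_assoc ‖l‖⁻¹ ‖l‖ ‖l‖, inv_mul_cancel₀ hln.ne', one_mul]
  rw [hinner] at hz1
  have hφfx : ⟪l, φ fx⟫ ≤ t - δ * t * ‖l‖ := by
    have h2 := mul_le_mul_of_nonneg_left hz1 ht0.le
    rw [mul_one, mul_add, ← mul_assoc, mul_one_div_cancel ht0.ne', one_mul] at h2
    nlinarith
  have hCS : ⟪l, w⟫ ≤ ‖l‖ * ‖w‖ := real_inner_le_norm l w
  have hwn : ‖w‖ ≤ r := hf2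
  have hlw : r * ‖l‖ ≤ ⟪l, w⟫ := by
    have hx2 : ⟪l, x⟫ = t + ε * ‖l‖ := by linarith
    have h3 : ⟪l, w⟫ = ⟪l, x⟫ - ⟪l, φ fx⟫ := by rw [hw, inner_sub_right]
    rw [h3, hx2, hr]
    nlinarith
  have hcomm : ‖l‖ * r = r * ‖l‖ := mul_comm _ _
  have hup : ‖l‖ * ‖w‖ ≤ ‖l‖ * r := mul_le_mul_of_nonneg_left hwn hln.le
  have hweq : ‖w‖ = r := by
    refine le_antisymm hwn ?_
    have h4 : ‖l‖ * r ≤ ‖l‖ * ‖w‖ := by linarith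
    exact le_of_mul_le_mul_left h4 hln
  have hinner_eq : ⟪l, w⟫ = ‖l‖ * ‖w‖ := by
    refine le_antisymm hCS ?_
    rw [hweq]; linarith
  have hcol : ‖w‖ • l = ‖l‖ • w := inner_eq_norm_mul_iff_real.mp hinner_eq
  have hleq : l = (r⁻¹ * ‖l‖) • w := by
    rw [hweq] at hcol
    have h5 : l = r⁻¹ • (‖l‖ • w) := by
      rw [← hcol, smul_smul, inv_mul_cancel₀ hδt.ne', one_smul]
    rw [smul_smul] at h5
    exact h5
  have ha0 : 0 < r⁻¹ * ‖l‖ := by positivity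
  have h1 : (r⁻¹ * ‖l‖) * lipDual K c φ δ w = 1 := by
    rw [← lipDual_smul _ ha0.le, ← hleq]
    exact hl1
  have hdw : lipDual K c φ δ w = (r⁻¹ * ‖l‖)⁻¹ := eq_inv_of_mul_eq_one_right h1
  rw [hdw, inv_inv]
  exact hleq


/-- existence of an optimal dual variable -/
lemma lip_exists [FiniteDimensional ℝ H] (hp : 0 < p) (hc0 : ∀ f, 0 ≤ c f)
    (hhom : ∀ (α : ℝ) (f : Fin K → ℝ), 0 ≤ α → c (α • f) = α ^ p * c f)
    (hconv : Convex ℝ {f | c f ≤ 1}) (hcpt : IsCompact {f | c f ≤ 1})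
    (hε : 0 ≤ ε) (hδ : 0 ≤ δ) (hx : ε < ‖x‖)
    (hcase : 0 < δ ∨ (δ = 0 ∧ 0 < ε ∧ (ball x ε ∩ (LinearMap.range φ : Set H)).Nonempty))
    {t : ℝ} {fx : Fin K → ℝ} (ht0 : 0 < t)
    (hfeast : (t, fx) ∈ lipFeas K p c φ x ε δ)
    (hminall : ∀ s g, (s, g) ∈ lipFeas K p c φ x ε δ → t ≤ s)
    (hval : lipVal K p c φ x ε δ = ENNReal.ofReal (t ^ p)) :
    (lipLambda K p c φ x ε δ).Nonempty := by
  have hδt : 0 < ε + δ * t := by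
    rcases hcase with h | ⟨h, hε0, -⟩
    · have := mul_pos h ht0; linarith
    · have := mul_nonneg hδ ht0.le; linarith
  obtain ⟨hf1, hf2⟩ := hfeast
  simp only at hf1 hf2
  have hcfx : c fx ≤ t ^ p := pow_aux1 hp (hc0 fx) hf1
  set w := x - φ fx with hwdef
  set r := ε + δ * t with hrdef
  have hrne : r ≠ 0 := hδt.ne'
  have hwnorm : ‖w‖ ≤ r := hf2
  have hs1 : ε/r + t*(δ/r) = 1 := by
    field_simp
    rw [hrdef]; ring
  -- the constraint region at level t
  set C : Set H := {y | ∃ e z, ‖e‖ ≤ ε ∧ z ∈ lipSet K c φ δ ∧ y = e + t • z} with hCdef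
  have hCconv : Convex ℝ C := by
    have hCeq : C = closedBall (0:H) ε + t • lipSet K c φ δ := by
      ext y
      constructor
      · rintro ⟨e, z, he, hz, rfl⟩
        exact ⟨e, mem_closedBall_zero_iff.mpr he, t • z, ⟨z, hz, rfl⟩, rfl⟩
      · rintro ⟨e, he, -, ⟨z, hz, rfl⟩, rfl⟩
        exact ⟨e, z, mem_closedBall_zero_iff.mp he, hz, rfl⟩
    rw [hCeq]
    exact (convex_closedBall _ _).add ((lipSet_convex hconv).smul t)
  have hxC : x ∈ C := by
    refine ⟨(ε/r) • w, (1/t) • φ fx + (δ/r) • w, ?_,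
      ⟨(1/t) • fx, lip_scale_mem hp hc0 hhom ht0 hcfx, ?_⟩, ?_⟩
    · rw [norm_smul, Real.norm_eq_abs, abs_of_nonneg (by positivity)]
      calc (ε/r) * ‖w‖ ≤ (ε/r) * r := mul_le_mul_of_nonneg_left hwnorm (by positivity)
        _ = ε := div_mul_cancel₀ _ hrne
    · rw [map_smul, add_sub_cancel_left, norm_smul, Real.norm_eq_abs,
        abs_of_nonneg (by positivity)]
      calc (δ/r) * ‖w‖ ≤ (δ/r) * r := mul_le_mul_of_nonneg_left hwnorm (by positivity)
        _ = δ := div_mul_cancel₀ _ hrne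
    · rw [smul_add, smul_smul, smul_smul, mul_one_div_cancel ht0.ne', one_smul,
        ← add_assoc, add_comm ((ε/r) • w) (φ fx), add_assoc, ← add_smul, hs1, one_smul,
        hwdef]
      simp
  have h0int : (0:H) ∈ interior C := by
    have hsub : ball (0:H) r ⊆ C := by
      intro y hy
      rw [mem_ball, dist_zero_right] at hy
      refine ⟨(ε/r) • y, (δ/r) • y, ?_, lip_ball_mem hp hhom ?_, ?_⟩
      · rw [norm_smul, Real.norm_eq_abs, abs_of_nonneg (by positivity)]
        calc (ε/r) * ‖y‖ ≤ (ε/r) * r := mul_le_mul_of_nonneg_left hy.le (by positivity)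
          _ = ε := div_mul_cancel₀ _ hrne
      · rw [norm_smul, Real.norm_eq_abs, abs_of_nonneg (by positivity)]
        calc (δ/r) * ‖y‖ ≤ (δ/r) * r := mul_le_mul_of_nonneg_left hy.le (by positivity)
          _ = δ := div_mul_cancel₀ _ hrne
      · rw [smul_smul, ← add_smul, hs1, one_smul]
    exact mem_interior.mpr ⟨ball 0 r, hsub, isOpen_ball, mem_ball_self hδt⟩
  have hxint : x ∉ interior C := by
    intro hxi
    rw [mem_interior_iff_mem_nhds, Metric.mem_nhds_iff] at hxi
    obtain ⟨ρ, hρ, hball⟩ := hxi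
    have hxn : 0 < ‖x‖ := lt_of_le_of_lt hε hx
    set η := ρ / (2 * ‖x‖) with hη
    have hη0 : 0 < η := by positivity
    have h1η : (0:ℝ) < 1 + η := by linarith
    have hmem : (1+η) • x ∈ C := by
      apply hball
      rw [mem_ball, dist_eq_norm]
      have he1 : (1+η) • x - x = η • x := by
        rw [add_smul, one_smul]; abel
      have he2 : η * ‖x‖ = ρ/2 := by
        rw [hη]
        field_simp [hxn.ne']
      rw [he1, norm_smul, Real.norm_eq_abs, abs_of_pos hη0, he2]
      linarith
    obtain ⟨e, z, he, ⟨f', hf'1, hf'2⟩, hzeq⟩ := hmem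
    set s := t / (1+η) with hs
    have hs0 : 0 < s := by positivity
    have hfeas2 : (s, s • f') ∈ lipFeas K p c φ x ε δ := by
      constructor
      · show c (s • f') ^ (1/p) ≤ s
        apply pow_aux2 hp (hc0 _) hs0.le
        rw [hhom _ _ hs0.le]
        calc s^p * c f' ≤ s^p * 1 :=
              mul_le_mul_of_nonneg_left hf'1 (Real.rpow_nonneg hs0.le _)
          _ = s^p := mul_one _
      · show ‖x - φ (s • f')‖ ≤ ε + δ * s
        have hxeq : x = (1+η)⁻¹ • (e + t • z) := by
          rw [← hzeq, smul_smul, inv_mul_cancel₀ h1η.ne', one_smul]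
        rw [map_smul, hxeq]
        have hsplit : (1+η)⁻¹ • (e + t • z) - s • φ f'
            = (1+η)⁻¹ • e + s • (z - φ f') := by
          rw [smul_add, smul_smul, smul_sub]
          have : (1+η)⁻¹ * t = s := by rw [hs, div_eq_inv_mul]
          rw [this]; abel
        rw [hsplit]
        have hb1 : ‖(1+η)⁻¹ • e‖ ≤ ε := by
          rw [norm_smul, Real.norm_eq_abs, abs_of_pos (by positivity)]
          have hi1 : (1+η)⁻¹ ≤ 1 := by
            rw [inv_le_one_iff₀]; right; linarith
          calc (1+η)⁻¹ * ‖e‖ ≤ 1 * ‖e‖ :=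
                mul_le_mul_of_nonneg_right hi1 (norm_nonneg _)
            _ = ‖e‖ := one_mul _
            _ ≤ ε := he
        have hb2 : ‖s • (z - φ f')‖ ≤ s * δ := by
          rw [norm_smul, Real.norm_eq_abs, abs_of_pos hs0]
          exact mul_le_mul_of_nonneg_left hf'2 hs0.le
        calc ‖(1+η)⁻¹ • e + s • (z - φ f')‖
            ≤ ‖(1+η)⁻¹ • e‖ + ‖s • (z - φ f')‖ := norm_add_le _ _
          _ ≤ ε + s * δ := add_le_add hb1 hb2
          _ = ε + δ * s := by ring
    have hts := hminall s (s • f') hfeas2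
    have hst : s < t := by
      rw [hs]
      apply div_lt_self ht0
      linarith
    linarith
  obtain ⟨F, hF⟩ := geometric_hahn_banach_open_point hCconv.interior isOpen_interior hxint
  have hsup : ∀ y ∈ C, F y ≤ F x := fun y hy => support_aux hCconv h0int F hF hy
  set l := (InnerProductSpace.toDual ℝ H).symm F with hldef
  have hlF : ∀ y, ⟪l, y⟫ = F y := fun y => InnerProductSpace.toDual_symm_apply
  have hFx : 0 < F x := by
    have h0 := hF 0 h0int
    simpa using h0
  have hlne : l ≠ 0 := by
    intro h
    have h2 := hlF x
    rw [h, inner_zero_left] at h2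
    linarith
  have hln : 0 < ‖l‖ := norm_pos_iff.mpr hlne
  have key1 : ∀ z ∈ lipSet K c φ δ, ε * ‖l‖ + t * ⟪l, z⟫ ≤ ⟪l, x⟫ := by
    intro z hz
    have hyC : (ε/‖l‖) • l + t • z ∈ C := by
      refine ⟨(ε/‖l‖) • l, z, ?_, hz, rfl⟩
      rw [norm_smul, Real.norm_eq_abs, abs_of_nonneg (by positivity),
        div_mul_cancel₀ _ hln.ne']
    have hle := hsup _ hyC
    have h2 : ⟪l, (ε/‖l‖) • l + t • z⟫ = ε*‖l‖ + t * ⟪l, z⟫ := by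
      rw [inner_add_right, real_inner_smul_right, real_inner_smul_right,
        real_inner_self_eq_norm_mul_norm]
      congr 1
      field_simp [hln.ne']
    calc ε*‖l‖ + t*⟪l, z⟫ = ⟪l, (ε/‖l‖) • l + t • z⟫ := h2.symm
      _ = F ((ε/‖l‖) • l + t • z) := hlF _
      _ ≤ F x := hle
      _ = ⟪l, x⟫ := (hlF x).symm
  obtain ⟨e₀, z₀, he₀, hz₀, hxeq₀⟩ := hxC
  have key2 : ⟪l, x⟫ ≤ ε * ‖l‖ + t * lipDual K c φ δ l := by
    rw [hxeq₀, inner_add_right, real_inner_smul_right]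
    have h1 : ⟪l, e₀⟫ ≤ ε * ‖l‖ := by
      calc ⟪l, e₀⟫ ≤ ‖l‖ * ‖e₀‖ := real_inner_le_norm l e₀
        _ ≤ ‖l‖ * ε := mul_le_mul_of_nonneg_left he₀ hln.le
        _ = ε * ‖l‖ := mul_comm _ _
    have h2 : ⟪l, z₀⟫ ≤ lipDual K c φ δ l := lipDual_ge hcpt l hz₀
    have h3 : t * ⟪l, z₀⟫ ≤ t * lipDual K c φ δ l :=
      mul_le_mul_of_nonneg_left h2 ht0.le
    linarith
  set d := lipDual K c φ δ l with hd
  have hd_le : t * d ≤ ⟪l, x⟫ - ε * ‖l‖ := by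
    have hb : ∀ b ∈ (fun z => ⟪l, z⟫) '' lipSet K c φ δ, b ≤ (⟪l, x⟫ - ε*‖l‖)/t := by
      rintro b ⟨z, hz, rfl⟩
      have h4 := key1 z hz
      rw [le_div_iff₀ ht0]
      nlinarith
    have h5 := csSup_le ⟨⟪l, (0:H)⟫,
      Set.mem_image_of_mem _ (lip_zero_mem hp hhom hδ)⟩ hb
    rw [le_div_iff₀ ht0] at h5
    calc t * d = d * t := mul_comm _ _
      _ ≤ ⟪l, x⟫ - ε * ‖l‖ := h5
  have hdeq : t * d = ⟪l, x⟫ - ε * ‖l‖ := by linarith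
  have hdpos : 0 < d := by
    rcases hcase with hδpos | ⟨hδ0, hε0, y, hyb, g, hyg⟩
    · have hzS : (δ/‖l‖) • l ∈ lipSet K c φ δ := by
        apply lip_ball_mem hp hhom
        rw [norm_smul, Real.norm_eq_abs, abs_of_nonneg (by positivity),
          div_mul_cancel₀ _ hln.ne']
      have h6 := lipDual_ge hcpt l hzS
      rw [real_inner_smul_right, real_inner_self_eq_norm_mul_norm] at h6
      calc (0:ℝ) < δ * ‖l‖ := mul_pos hδpos hln
        _ = δ/‖l‖*(‖l‖*‖l‖) := by field_simp
        _ ≤ d := h6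
    · have hd0 : 0 ≤ d := lipDual_nonneg hp hhom hδ hcpt l
      rcases hd0.lt_or_eq with h | h
      · exact h
      exfalso
      have hlx : ⟪l, x⟫ = ε * ‖l‖ := by
        rw [← h] at hdeq; linarith
      have hyn : ‖y - x‖ < ε := by
        rw [mem_ball, dist_eq_norm] at hyb
        exact hyb
      have hly : 0 < ⟪l, y⟫ := by
        have h1 : ⟪l, y⟫ = ⟪l, x⟫ + ⟪l, y - x⟫ := by
          rw [← inner_add_right]
          congr 1
          abel
        have h2 : -⟪l, y - x⟫ ≤ ‖l‖ * ‖y - x‖ := by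
          have h3 := real_inner_le_norm l (x - y)
          have h4 : ⟪l, x - y⟫ = -⟪l, y - x⟫ := by
            rw [show x - y = -(y - x) from by abel, inner_neg_right]
          have h5 : ‖x - y‖ = ‖y - x‖ := norm_sub_rev x y
          rw [h4, h5] at h3
          exact h3
        have h3 : ‖l‖ * ‖y - x‖ < ‖l‖ * ε := mul_lt_mul_of_pos_left hyn hln
        have h4 : ‖l‖ * ε = ε * ‖l‖ := mul_comm _ _
        rw [h1, hlx]
        linarith
      set a := (c g + 1) ^ (-(1/p)) with hadef
      have hcg1 : (0:ℝ) < c g + 1 := by linarith [hc0 g]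
      have ha0 : 0 < a := Real.rpow_pos_of_pos hcg1 _
      have hag : c (a • g) ≤ 1 := by
        rw [hhom _ _ ha0.le, hadef, ← Real.rpow_mul hcg1.le]
        rw [show -(1/p) * p = -1 from by field_simp, Real.rpow_neg_one]
        rw [inv_mul_le_iff₀ hcg1, mul_one]
        linarith [hc0 g]
      have hzS : a • y ∈ lipSet K c φ δ := by
        refine ⟨a • g, hag, ?_⟩
        rw [map_smul, hyg]
        simp [hδ0]
      have h6 := lipDual_ge hcpt l hzS
      rw [real_inner_smul_right, ← hd, ← h] at h6
      nlinarith
  refine ⟨d⁻¹ • l, ?_, ?_⟩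
  · show lipDual K c φ δ (d⁻¹ • l) = 1
    rw [lipDual_smul _ (by positivity), ← hd, inv_mul_cancel₀ hdpos.ne']
  · show ENNReal.ofReal (⟪d⁻¹ • l, x⟫ - ε * ‖d⁻¹ • l‖) = lipVal K p c φ x ε δ ^ (1/p)
    have h1 : ⟪d⁻¹ • l, x⟫ - ε * ‖d⁻¹ • l‖ = t := by
      rw [real_inner_smul_left, norm_smul, Real.norm_eq_abs,
        abs_of_pos (by positivity : (0:ℝ) < d⁻¹)]
      have h2 : d⁻¹ * ⟪l, x⟫ - ε * (d⁻¹ * ‖l‖) = d⁻¹ * (⟪l, x⟫ - ε * ‖l‖) := by ring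
      rw [h2, ← hdeq]
      field_simp
    rw [h1, lip_val_rpow hp ht0 hval]

end Helpers

/-- If `x` is feasible with `‖x‖ > ε`, and either `δ > 0`, or `δ = 0`,
`ε > 0` and the open ball `B(x,ε)` meets `image φ`, then `Λ_δ(φ,x,ε)` is a singleton
`{λ*}` with `λ* = (x − φ fₓ) / ‖x − φ fₓ‖'_φ` for any `fₓ ∈ E(φ,x,ε,δ)`. -/
theorem lambda_singleton
    [FiniteDimensional ℝ H]
    (K : ℕ) (p : ℝ) (c : (Fin K → ℝ) → ℝ)
    (φ : (Fin K → ℝ) →ₗ[ℝ] H) (x : H) (ε δ : ℝ)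
    (hp : 0 < p) (hc0 : ∀ f, 0 ≤ c f)
    (hhom : ∀ (α : ℝ) (f : Fin K → ℝ), 0 ≤ α → c (α • f) = α ^ p * c f)
    (hconv : Convex ℝ {f | c f ≤ 1}) (hcpt : IsCompact {f | c f ≤ 1})
    (hε : 0 ≤ ε) (hδ : 0 ≤ δ)
    (hfeas : lipVal K p c φ x ε δ ≠ ⊤) (hx : ε < ‖x‖)
    (hcase : 0 < δ ∨
      (δ = 0 ∧ 0 < ε ∧ (ball x ε ∩ (LinearMap.range φ : Set H)).Nonempty)) :
    ∃ lstar : H, lipLambda K p c φ x ε δ = {lstar} ∧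
      ∀ fx ∈ lipEnc K p c φ x ε δ,
        lstar = (lipDual K c φ δ (x - φ fx))⁻¹ • (x - φ fx) := by
  obtain ⟨t, ft, ht0, hfeast, hminall, hval⟩ := lip_attain hp hc0 hhom hcpt hfeas hx
  have hEmem : ft ∈ lipEnc K p c φ x ε δ := ⟨t, hfeast, hval.symm⟩
  obtain ⟨l0, hl0⟩ :=
    lip_exists hp hc0 hhom hconv hcpt hε hδ hx hcase ht0 hfeast hminall hval
  set lstar := (lipDual K c φ δ (x - φ ft))⁻¹ • (x - φ ft) with hls
  have huniq : ∀ l ∈ lipLambda K p c φ x ε δ, l = lstar := fun l hl =>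
    lip_uniq hp hc0 hhom hcpt hε hδ hx hcase ht0 hval hl hEmem
  have hlstar : lstar ∈ lipLambda K p c φ x ε δ := by
    rw [← huniq l0 hl0]
    exact hl0
  refine ⟨lstar, ?_, ?_⟩
  · ext l
    simp only [Set.mem_singleton_iff]
    exact ⟨fun hl => huniq l hl, fun h => h ▸ hlstar⟩
  · intro fx hfx
    exact lip_uniq hp hc0 hhom hcpt hε hδ hx hcase ht0 hval hlstar hfx
end
end
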